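/- arXiv:2509.00824 — 2 statements merged into one kernel-verified Lean document; each statement's English description precedes it below -/
import Mathlib

section
/- Let x₀ := (1/2, 0, 0) ∈ ℝ³ and let t satisfy 0 < t ≤ min(1/(3√𝔢), 1/4). Then | ∫_{B_t(x₀)} ψ_E(x) dx | ≥ (√2/2) · |B_t(x₀)| · cos(1/2) = (2√2/3) π t³ cos(1/2), where B_t(x₀) is the open Euclidean ball of radius t centered at x₀ and |B_t(x₀)| = (4/3)πt³ is its Lebesgue volume. -/
open MeasureTheory Complex

noncomputable section

/-- The lattice `ℤ³`. -/
abbrev Z3 := Fin 3 → ℤ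

/-- Euclidean three-space. -/
abbrev E3 := EuclideanSpace ℝ (Fin 3)

/-- The embedding of the lattice `ℤ³` into `ℝ³`. -/
def embZ (n : Z3) : E3 := WithLp.toLp 2 (fun i : Fin 3 => (n i : ℝ))

/-- `ψ₀(u,v) = ∫ e^{isu} e^{iv√(𝔢−s²)} ρ(s) ds`. -/
def psi0 (e : ℝ) (ρ : ℝ → ℝ) (u v : ℝ) : ℂ :=
  ∫ s : ℝ,
    Complex.exp (Complex.I * s * u) *
      Complex.exp (Complex.I * v * Real.sqrt (e - s ^ 2)) * (ρ s : ℂ)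

/-- `ψ_E(x₁,x₂,x₃) = sin(πx₁) ψ₀(x₂,x₃)`. -/
def psiE (e : ℝ) (ρ : ℝ → ℝ) (x : E3) : ℂ :=
  Real.sin (Real.pi * x 0) * psi0 e ρ (x 1) (x 2)

/-- The hypotheses on the profile function `ρ`: nonnegative, bounded, measurable,
normalized `∫ρ = 1`, and supported in `[√𝔢/4, √𝔢/2]`. -/
structure IsProfile (e : ℝ) (ρ : ℝ → ℝ) : Prop where
  nonneg : ∀ s, 0 ≤ ρ s
  measurable : Measurable ρ
  bounded : ∃ M : ℝ, ∀ s, ρ s ≤ M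
  normalized : ∫ s : ℝ, ρ s = 1
  support : Function.support ρ ⊆ Set.Icc (Real.sqrt e / 4) (Real.sqrt e / 2)

/-- The point `x₀ = (1/2, 0, 0) ∈ ℝ³`. -/
def x0 : E3 := WithLp.toLp 2 (fun i : Fin 3 => if i = 0 then (1 / 2 : ℝ) else 0)

lemma vol_ball3 (x : E3) (t : ℝ) (ht : 0 ≤ t) :
    (volume (Metric.ball x t)).toReal = 4 / 3 * Real.pi * t ^ 3 := by
  rw [EuclideanSpace.volume_ball]
  have h1 : Real.Gamma ((Fintype.card (Fin 3) : ℝ) / 2 + 1) = 3 / 4 * Real.sqrt Real.pi := by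
    have : ((Fintype.card (Fin 3) : ℝ) / 2 + 1) = 3/2 + 1 := by norm_num
    rw [this, Real.Gamma_add_one (by norm_num)]
    have : (3/2 : ℝ) = 1/2 + 1 := by norm_num
    rw [this, Real.Gamma_add_one (by norm_num), Real.Gamma_one_half_eq]
    ring
  rw [h1]
  have hπ : (0:ℝ) < Real.pi := Real.pi_pos
  have hs : Real.sqrt Real.pi > 0 := Real.sqrt_pos.mpr hπ
  have h2 : Real.sqrt Real.pi ^ Fintype.card (Fin 3) / (3 / 4 * Real.sqrt Real.pi)
      = 4 / 3 * Real.pi := by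
    simp only [Fintype.card_fin]
    rw [show Real.sqrt Real.pi ^ 3 = Real.pi * Real.sqrt Real.pi by
      rw [pow_succ, sq, Real.mul_self_sqrt hπ.le]]
    field_simp
  rw [h2, ENNReal.toReal_mul, ENNReal.toReal_pow, ENNReal.toReal_ofReal ht,
    ENNReal.toReal_ofReal (by positivity)]
  simp [Fintype.card_fin]; ring

lemma coord_dist_le (x y : E3) (i : Fin 3) : |x i - y i| ≤ dist x y := by
  rw [EuclideanSpace.dist_eq]
  have h : dist (x i) (y i) ^ 2 ≤ ∑ j, dist (x j) (y j) ^ 2 :=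
    Finset.single_le_sum (f := fun j => dist (x j) (y j) ^ 2)
      (fun j _ => sq_nonneg _) (Finset.mem_univ i)
  calc |x i - y i| = Real.sqrt (dist (x i) (y i) ^ 2) := by
        rw [Real.sqrt_sq dist_nonneg, Real.dist_eq]
    _ ≤ _ := Real.sqrt_le_sqrt h

lemma rho_integrable {e : ℝ} {ρ : ℝ → ℝ} (hρ : IsProfile e ρ) : Integrable ρ := by
  by_contra h
  have := hρ.normalized
  rw [integral_undef h] at this
  norm_num at this

lemma integrand_aesm {e : ℝ} {ρ : ℝ → ℝ} (hρ : IsProfile e ρ) (u v : ℝ) :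
    AEStronglyMeasurable (fun s : ℝ => Complex.exp (Complex.I * s * u) *
      Complex.exp (Complex.I * v * Real.sqrt (e - s ^ 2)) * (ρ s : ℂ)) volume := by
  apply Measurable.aestronglyMeasurable
  have h1 : Measurable fun s : ℝ => Complex.exp (Complex.I * s * u) :=
    (Complex.measurable_exp.comp (by fun_prop))
  have h2 : Measurable fun s : ℝ => Complex.exp (Complex.I * v * Real.sqrt (e - s ^ 2)) :=
    Complex.measurable_exp.comp (by fun_prop)
  exact (h1.mul h2).mul (Complex.measurable_ofReal.comp hρ.measurable)

lemma integrand_norm {e : ℝ} {ρ : ℝ → ℝ} (hρ : IsProfile e ρ) (u v s : ℝ) :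
    ‖Complex.exp (Complex.I * s * u) *
      Complex.exp (Complex.I * v * Real.sqrt (e - s ^ 2)) * (ρ s : ℂ)‖ = ρ s := by
  simp only [norm_mul, Complex.norm_exp, Complex.norm_real, Real.norm_eq_abs]
  have h1 : (Complex.I * s * u).re = 0 := by simp
  have h2 : (Complex.I * v * (Real.sqrt (e - s ^ 2) : ℝ)).re = 0 := by simp
  rw [h1, h2, Real.exp_zero, _root_.abs_of_nonneg (hρ.nonneg s)]
  ring

lemma integrand_integrable {e : ℝ} {ρ : ℝ → ℝ} (hρ : IsProfile e ρ) (u v : ℝ) :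
    Integrable (fun s : ℝ => Complex.exp (Complex.I * s * u) *
      Complex.exp (Complex.I * v * Real.sqrt (e - s ^ 2)) * (ρ s : ℂ)) := by
  refine (rho_integrable hρ).mono' (integrand_aesm hρ u v) ?_
  filter_upwards with s
  rw [integrand_norm hρ u v s]

lemma integrand_re {e : ℝ} (ρ : ℝ → ℝ) (u v s : ℝ) :
    (Complex.exp (Complex.I * s * u) *
      Complex.exp (Complex.I * v * Real.sqrt (e - s ^ 2)) * (ρ s : ℂ)).re
      = Real.cos (s * u + v * Real.sqrt (e - s ^ 2)) * ρ s := by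
  rw [← Complex.exp_add,
    show Complex.I * s * u + Complex.I * v * Real.sqrt (e - s ^ 2)
      = ((s * u + v * Real.sqrt (e - s ^ 2) : ℝ) : ℂ) * Complex.I by push_cast; ring]
  rw [mul_comm, Complex.re_ofReal_mul, Complex.exp_ofReal_mul_I_re, mul_comm]

lemma norm_psi0_le {e : ℝ} {ρ : ℝ → ℝ} (hρ : IsProfile e ρ) (u v : ℝ) :
    ‖psi0 e ρ u v‖ ≤ 1 := by
  rw [psi0]
  calc ‖∫ s : ℝ, Complex.exp (Complex.I * s * u) *
        Complex.exp (Complex.I * v * Real.sqrt (e - s ^ 2)) * (ρ s : ℂ)‖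
      ≤ ∫ s : ℝ, ‖Complex.exp (Complex.I * s * u) *
        Complex.exp (Complex.I * v * Real.sqrt (e - s ^ 2)) * (ρ s : ℂ)‖ :=
        norm_integral_le_integral_norm _
    _ = ∫ s : ℝ, ρ s := by
        congr 1; funext s; exact integrand_norm hρ u v s
    _ = 1 := hρ.normalized

lemma psi0_continuous {e : ℝ} {ρ : ℝ → ℝ} (hρ : IsProfile e ρ) :
    Continuous (fun p : ℝ × ℝ => psi0 e ρ p.1 p.2) := by
  apply MeasureTheory.continuous_of_dominated (bound := ρ)
  · exact fun p => integrand_aesm hρ p.1 p.2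
  · intro p
    filter_upwards with s
    rw [integrand_norm hρ p.1 p.2 s]
  · exact rho_integrable hρ
  · filter_upwards with s
    have h1 : Continuous fun p : ℝ × ℝ => Complex.exp (Complex.I * s * p.1) := by
      apply Complex.continuous_exp.comp; fun_prop
    have h2 : Continuous fun p : ℝ × ℝ =>
        Complex.exp (Complex.I * p.2 * Real.sqrt (e - s ^ 2)) := by
      apply Complex.continuous_exp.comp; fun_prop
    exact (h1.mul h2).mul continuous_const

lemma psiE_continuous {e : ℝ} {ρ : ℝ → ℝ} (hρ : IsProfile e ρ) :
    Continuous (psiE e ρ) := by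
  unfold psiE
  have h0 : Continuous fun x : E3 =>
      ((Real.sin (Real.pi * x 0) : ℝ) : ℂ) := by
    apply Complex.continuous_ofReal.comp
    exact Real.continuous_sin.comp (continuous_const.mul (by fun_prop))
  have ha : Continuous fun x : E3 => (x 1 : ℝ) := by fun_prop
  have hb : Continuous fun x : E3 => (x 2 : ℝ) := by fun_prop
  have h1 : Continuous fun x : E3 => psi0 e ρ (x 1) (x 2) :=
    (psi0_continuous hρ).comp₂ ha hb
  exact h0.mul h1

lemma re_psi0_ge {e : ℝ} (he : 0 < e) {ρ : ℝ → ℝ} (hρ : IsProfile e ρ)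
    {t u v : ℝ} (hte : Real.sqrt e * t ≤ 1 / 3)
    (hu : |u| ≤ t) (hv : |v| ≤ t) :
    Real.cos (1 / 2) ≤ (psi0 e ρ u v).re := by
  have hse : 0 < Real.sqrt e := Real.sqrt_pos.mpr he
  have ht0 : 0 ≤ t := le_trans (abs_nonneg u) hu
  rw [psi0, ← RCLike.re_eq_complex_re,
    ← integral_re (integrand_integrable hρ u v)]
  simp only [RCLike.re_eq_complex_re]
  have h1 : ∫ s : ℝ, (Complex.exp (Complex.I * s * u) *
      Complex.exp (Complex.I * v * Real.sqrt (e - s ^ 2)) * (ρ s : ℂ)).re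
      = ∫ s : ℝ, Real.cos (s * u + v * Real.sqrt (e - s ^ 2)) * ρ s := by
    congr 1; funext s; exact integrand_re ρ u v s
  rw [h1]
  have key : ∀ s : ℝ, Real.cos (1/2) * ρ s
      ≤ Real.cos (s * u + v * Real.sqrt (e - s ^ 2)) * ρ s := by
    intro s
    by_cases hs : ρ s = 0
    · simp [hs]
    · have hmem := hρ.support hs
      obtain ⟨hs1, hs2⟩ := hmem
      have hs0 : 0 < s := lt_of_lt_of_le (by positivity) hs1
      have hw : Real.sqrt (e - s ^ 2) ≤ Real.sqrt e :=
        Real.sqrt_le_sqrt (by nlinarith [sq_nonneg s])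
      have hw0 : 0 ≤ Real.sqrt (e - s ^ 2) := Real.sqrt_nonneg _
      have hθ : |s * u + v * Real.sqrt (e - s ^ 2)| ≤ 1 / 2 := by
        calc |s * u + v * Real.sqrt (e - s ^ 2)|
            ≤ |s * u| + |v * Real.sqrt (e - s ^ 2)| := abs_add_le _ _
          _ = s * |u| + |v| * Real.sqrt (e - s ^ 2) := by
              rw [abs_mul, abs_mul, _root_.abs_of_pos hs0, _root_.abs_of_nonneg hw0]
          _ ≤ (Real.sqrt e / 2) * t + t * Real.sqrt e := by gcongr
          _ = (3 / 2) * (Real.sqrt e * t) := by ring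
          _ ≤ (3 / 2) * (1 / 3) := by gcongr
          _ = 1 / 2 := by norm_num
      have hcos : Real.cos (1/2) ≤ Real.cos (s * u + v * Real.sqrt (e - s ^ 2)) := by
        rw [← Real.cos_abs (s * u + v * Real.sqrt (e - s ^ 2))]
        apply Real.cos_le_cos_of_nonneg_of_le_pi (abs_nonneg _) _ hθ
        linarith [Real.pi_gt_three]
      exact mul_le_mul_of_nonneg_right hcos (hρ.nonneg s)
  have hInt1 : Integrable (fun s : ℝ => Real.cos (1/2) * ρ s) :=
    (rho_integrable hρ).const_mul _
  have hInt2 : Integrable (fun s : ℝ =>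
      Real.cos (s * u + v * Real.sqrt (e - s ^ 2)) * ρ s) := by
    rw [show (fun s : ℝ => Real.cos (s * u + v * Real.sqrt (e - s ^ 2)) * ρ s)
        = fun s : ℝ => (Complex.exp (Complex.I * s * u) *
          Complex.exp (Complex.I * v * Real.sqrt (e - s ^ 2)) * (ρ s : ℂ)).re by
      funext s; exact (integrand_re ρ u v s).symm]
    exact (integrand_integrable hρ u v).re
  calc Real.cos (1/2) = ∫ s : ℝ, Real.cos (1/2) * ρ s := by
        rw [integral_const_mul, hρ.normalized, mul_one]
    _ ≤ _ := integral_mono hInt1 hInt2 key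

/-- for `0 < t ≤ min(1/(3√𝔢), 1/4)`,
`|∫_{B_t(x₀)} ψ_E(x) dx| ≥ (√2/2)|B_t(x₀)| cos(1/2) = (2√2/3) π t³ cos(1/2)`. -/
theorem psiE_ball_average_lower_bound
    (e : ℝ) (he : 0 < e) (ρ : ℝ → ℝ) (hρ : IsProfile e ρ)
    (t : ℝ) (ht : 0 < t) (ht' : t ≤ min (1 / (3 * Real.sqrt e)) (1 / 4)) :
    2 * Real.sqrt 2 / 3 * Real.pi * t ^ 3 * Real.cos (1 / 2)
      ≤ ‖∫ x in Metric.ball x0 t, psiE e ρ x‖ := by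
  have hse : 0 < Real.sqrt e := Real.sqrt_pos.mpr he
  have ht4 : t ≤ 1 / 4 := le_trans ht' (min_le_right _ _)
  have hte : Real.sqrt e * t ≤ 1 / 3 := by
    have h := le_trans ht' (min_le_left _ _)
    rw [le_div_iff₀ (by positivity)] at h
    nlinarith
  set c : ℝ := Real.sqrt 2 / 2 * Real.cos (1 / 2) with hc
  have hcos_pos : 0 < Real.cos (1 / 2) := by
    apply Real.cos_pos_of_mem_Ioo
    constructor <;> [linarith [Real.pi_gt_three]; linarith [Real.pi_gt_three]]
  -- pointwise bound on the ball
  have hpt : ∀ x ∈ Metric.ball x0 t, c ≤ (psiE e ρ x).re := by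
    intro x hx
    rw [Metric.mem_ball] at hx
    have h0 : |x 0 - 1/2| < t := by
      have := coord_dist_le x x0 0
      simp [x0] at this
      calc |x 0 - 1/2| ≤ dist x x0 := by
            simpa [x0] using coord_dist_le x x0 0
        _ < t := hx
    have h1 : |x 1| ≤ t := by
      have := coord_dist_le x x0 1
      simp [x0] at this hx
      linarith [hx, this]
    have h2 : |x 2| ≤ t := by
      have := coord_dist_le x x0 2
      simp [x0] at this hx
      linarith [hx, this]
    have hsin : Real.sqrt 2 / 2 ≤ Real.sin (Real.pi * x 0) := by
      rw [← Real.cos_pi_div_two_sub, ← Real.cos_pi_div_four]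
      rw [← Real.cos_abs (Real.pi / 2 - Real.pi * x 0)]
      apply Real.cos_le_cos_of_nonneg_of_le_pi (abs_nonneg _) (by linarith [Real.pi_pos])
      have : |Real.pi / 2 - Real.pi * x 0| = Real.pi * |x 0 - 1/2| := by
        rw [← abs_of_pos Real.pi_pos, ← abs_mul, abs_of_pos Real.pi_pos]
        rw [abs_sub_comm]
        congr 1; ring
      rw [this]
      calc Real.pi * |x 0 - 1/2| ≤ Real.pi * (1/4) := by
            apply mul_le_mul_of_nonneg_left _ Real.pi_pos.le
            linarith
        _ = Real.pi / 4 := by ring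
    have hre : Real.cos (1/2) ≤ (psi0 e ρ (x 1) (x 2)).re :=
      re_psi0_ge he hρ hte h1 h2
    have : c ≤ Real.sin (Real.pi * x 0) * (psi0 e ρ (x 1) (x 2)).re := by
      rw [hc]
      apply mul_le_mul hsin hre hcos_pos.le
      linarith [hsin, Real.sqrt_nonneg 2, Real.sq_sqrt (by norm_num : (2:ℝ) ≥ 0)]
    calc c ≤ Real.sin (Real.pi * x 0) * (psi0 e ρ (x 1) (x 2)).re := this
      _ = (psiE e ρ x).re := by
          rw [psiE, Complex.re_ofReal_mul]
  -- integrability of psiE on the ball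
  have hmb : MeasurableSet (Metric.ball x0 t) := measurableSet_ball
  have hvol : volume (Metric.ball x0 t) < ⊤ := measure_ball_lt_top
  have hint : IntegrableOn (psiE e ρ) (Metric.ball x0 t) := by
    apply Integrable.mono' (g := fun _ : E3 => (1:ℝ))
    · exact integrableOn_const hvol.ne
    · exact (psiE_continuous hρ).aestronglyMeasurable.restrict
    · filter_upwards with x
      rw [psiE, norm_mul]
      calc ‖((Real.sin (Real.pi * x 0) : ℝ) : ℂ)‖ * ‖psi0 e ρ (x 1) (x 2)‖
          ≤ 1 * 1 := by
            apply mul_le_mul _ (norm_psi0_le hρ _ _) (norm_nonneg _) zero_le_one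
            rw [Complex.norm_real, Real.norm_eq_abs]
            exact abs_le.mpr ⟨Real.neg_one_le_sin _, Real.sin_le_one _⟩
        _ = 1 := mul_one 1
  -- main chain
  have hintre : ∫ x in Metric.ball x0 t, (psiE e ρ x).re
      = (∫ x in Metric.ball x0 t, psiE e ρ x).re := by
    rw [← RCLike.re_eq_complex_re, integral_re hint]
  have hlow : c * (volume (Metric.ball x0 t)).toReal
      ≤ ∫ x in Metric.ball x0 t, (psiE e ρ x).re := by
    calc c * (volume (Metric.ball x0 t)).toReal
        = ∫ _ in Metric.ball x0 t, c := by
          rw [setIntegral_const]; rw [smul_eq_mul, measureReal_def]; ring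
      _ ≤ ∫ x in Metric.ball x0 t, (psiE e ρ x).re :=
          setIntegral_mono_on (integrableOn_const hvol.ne) hint.re hmb hpt
  have hfin : c * (volume (Metric.ball x0 t)).toReal
      ≤ ‖∫ x in Metric.ball x0 t, psiE e ρ x‖ := by
    calc c * (volume (Metric.ball x0 t)).toReal
        ≤ (∫ x in Metric.ball x0 t, psiE e ρ x).re := by rw [← hintre]; exact hlow
      _ ≤ ‖∫ x in Metric.ball x0 t, psiE e ρ x‖ := Complex.re_le_norm _
  rw [vol_ball3 x0 t ht.le] at hfin
  calc 2 * Real.sqrt 2 / 3 * Real.pi * t ^ 3 * Real.cos (1 / 2)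
      = c * (4 / 3 * Real.pi * t ^ 3) := by rw [hc]; ring
    _ ≤ _ := hfin
end
end

section
/- Let ℋ be a complex Hilbert space, let B be a self-adjoint (densely defined, possibly unbounded) operator on ℋ with domain D(B), and let C be a bounded self-adjoint operator on ℋ satisfying ⟨φ, Cφ⟩ ≥ κ ‖φ‖² for all φ ∈ ℋ and some κ > 0. Then the operator A := B + iC, with domain D(B), is a bijection from D(B) onto ℋ, and its inverse satisfies ‖A⁻¹ξ‖ ≤ κ⁻¹ ‖ξ‖ for all ξ ∈ ℋ. -/
open Complex

noncomputable section

/-- if `B` is a (possibly unbounded) self-adjoint operator on a complex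
Hilbert space `ℋ` and `C` is a bounded self-adjoint operator with `⟨φ, Cφ⟩ ≥ κ‖φ‖²` for
some `κ > 0`, then `A = B + iC : D(B) → ℋ` is a bijection and `‖A⁻¹ξ‖ ≤ κ⁻¹‖ξ‖`,
i.e. `‖φ‖ ≤ κ⁻¹ ‖Aφ‖` for all `φ ∈ D(B)`. -/
theorem dissipative_inverse_bound
    {ℋ : Type*} [NormedAddCommGroup ℋ] [InnerProductSpace ℂ ℋ] [CompleteSpace ℋ]
    (B : ℋ →ₗ.[ℂ] ℋ) (hB : IsSelfAdjoint B)
    (C : ℋ →L[ℂ] ℋ) (hC : IsSelfAdjoint C)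
    (κ : ℝ) (hκ : 0 < κ)
    (hCbd : ∀ φ : ℋ, κ * ‖φ‖ ^ 2 ≤ (inner (𝕜 := ℂ) φ (C φ)).re) :
    Function.Bijective (fun φ : B.domain => B φ + Complex.I • C (φ : ℋ)) ∧
    ∀ φ : B.domain, ‖(φ : ℋ)‖ ≤ κ⁻¹ * ‖B φ + Complex.I • C (φ : ℋ)‖ := by
  have hd : Dense (B.domain : Set ℋ) := hB.dense_domain
  have hBeq : B.adjoint = B := hB
  have hdom : B.adjoint.domain = B.domain := congrArg LinearPMap.domain hBeq
  have happ : ∀ ⦃x : B.adjoint.domain⦄ ⦃y : B.domain⦄, (x : ℋ) = (y : ℋ) →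
      B.adjoint x = B y := by
    intro x y hxy
    obtain ⟨x, hx⟩ := x
    obtain ⟨y, hy⟩ := y
    simp only at hxy
    subst hxy
    have h := (LinearPMap.ext_iff.mp hBeq).2
    exact @h x hx hy
  have hFA := LinearPMap.adjoint_isFormalAdjoint hd
  -- symmetry of B
  have hsym : ∀ x y : B.domain,
      inner (𝕜 := ℂ) ((B x : ℋ)) ((y : ℋ)) = inner (𝕜 := ℂ) ((x : ℋ)) ((B y : ℋ)) := by
    intro x y
    have hx : (x : ℋ) ∈ B.adjoint.domain := hdom.symm ▸ x.2
    have h := hFA ⟨(x : ℋ), hx⟩ y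
    rwa [happ (rfl : ((⟨(x : ℋ), hx⟩ : B.adjoint.domain) : ℋ) = (x : ℋ))] at h
  -- recovering membership in the domain from a weak identity
  have hrecover : ∀ (ψ w : ℋ),
      (∀ z : B.domain, inner (𝕜 := ℂ) w ((z : ℋ)) = inner (𝕜 := ℂ) ψ ((B z : ℋ))) →
      ∃ hmem : ψ ∈ B.domain, B ⟨ψ, hmem⟩ = w := by
    intro ψ w h
    have hmem' : ψ ∈ B.adjoint.domain := LinearPMap.mem_adjoint_domain_of_exists ψ ⟨w, h⟩
    have hval : B.adjoint ⟨ψ, hmem'⟩ = w := LinearPMap.adjoint_apply_eq hd ⟨ψ, hmem'⟩ h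
    have hmem : ψ ∈ B.domain := hdom ▸ hmem'
    exact ⟨hmem, by
      rw [← happ (rfl : ((⟨ψ, hmem'⟩ : B.adjoint.domain) : ℋ) = ((⟨ψ, hmem⟩ : B.domain) : ℋ))]
      exact hval⟩
  set A : B.domain → ℋ := fun φ : B.domain => B φ + Complex.I • C (φ : ℋ) with hA
  -- the key positivity estimate
  have hkey : ∀ φ : B.domain, κ * ‖(φ : ℋ)‖ ^ 2 ≤ (inner (𝕜 := ℂ) ((φ : ℋ)) (A φ)).im := by
    intro φ
    have h1 : inner (𝕜 := ℂ) ((φ : ℋ)) (A φ)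
        = inner (𝕜 := ℂ) ((φ : ℋ)) ((B φ : ℋ))
          + Complex.I * inner (𝕜 := ℂ) ((φ : ℋ)) (C (φ : ℋ)) := by
      simp only [hA]
      rw [inner_add_right, inner_smul_right]
    have h2 : (starRingEnd ℂ) (inner (𝕜 := ℂ) ((φ : ℋ)) ((B φ : ℋ)))
        = inner (𝕜 := ℂ) ((φ : ℋ)) ((B φ : ℋ)) :=
      (inner_conj_symm _ _).trans (hsym φ φ)
    have h2' : (inner (𝕜 := ℂ) ((φ : ℋ)) ((B φ : ℋ))).im = 0 :=
      Complex.conj_eq_iff_im.mp h2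
    have h3 : (inner (𝕜 := ℂ) ((φ : ℋ)) (A φ)).im
        = (inner (𝕜 := ℂ) ((φ : ℋ)) (C (φ : ℋ))).re := by
      rw [h1]
      simp [Complex.add_im, Complex.mul_im, h2']
    rw [h3]
    exact hCbd _
  -- lower norm bound
  have hbound : ∀ φ : B.domain, κ * ‖(φ : ℋ)‖ ≤ ‖A φ‖ := by
    intro φ
    have h1 := hkey φ
    have h2 : (inner (𝕜 := ℂ) ((φ : ℋ)) (A φ)).im ≤ ‖(φ : ℋ)‖ * ‖A φ‖ := by
      calc (inner (𝕜 := ℂ) ((φ : ℋ)) (A φ)).im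
          ≤ |(inner (𝕜 := ℂ) ((φ : ℋ)) (A φ)).im| := le_abs_self _
        _ ≤ ‖inner (𝕜 := ℂ) ((φ : ℋ)) (A φ)‖ := Complex.abs_im_le_norm _
        _ = ‖inner (𝕜 := ℂ) ((φ : ℋ)) (A φ)‖ := rfl
        _ ≤ ‖(φ : ℋ)‖ * ‖A φ‖ := norm_inner_le_norm _ _
    rcases eq_or_lt_of_le (norm_nonneg ((φ : ℋ))) with h0 | h0
    · rw [← h0, mul_zero]
      exact norm_nonneg _
    · nlinarith
  -- A is subtractive
  have hsubA : ∀ x y : B.domain, A (x - y) = A x - A y := by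
    intro x y
    simp only [hA]
    rw [B.map_sub]
    push_cast
    rw [map_sub, smul_sub]
    abel
  -- injectivity
  have hinj : Function.Injective A := by
    intro x y hxy
    have h0 : A (x - y) = 0 := by rw [hsubA, hxy, sub_self]
    have h1 := hbound (x - y)
    rw [h0, norm_zero] at h1
    have h2 : ‖((x - y : B.domain) : ℋ)‖ = 0 :=
      le_antisymm (by nlinarith [norm_nonneg ((x - y : B.domain) : ℋ)]) (norm_nonneg _)
    have h3 : ((x : ℋ)) - ((y : ℋ)) = 0 := by
      have := norm_eq_zero.mp h2
      rwa [Submodule.coe_sub] at this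
    exact Subtype.ext (sub_eq_zero.mp h3)
  -- the range as a linear map
  let Amap : B.domain →ₗ[ℂ] ℋ := B.toFun + Complex.I • (C.toLinearMap.comp B.domain.subtype)
  have hAmap : ∀ φ : B.domain, Amap φ = A φ := fun φ => rfl
  -- range is closed
  have hclosed : IsClosed ((LinearMap.range Amap : Submodule ℂ ℋ) : Set ℋ) := by
    refine isClosed_of_closure_subset ?_
    intro ξ hξ
    obtain ⟨u, hu, hulim⟩ := mem_closure_iff_seq_limit.mp hξ
    choose φ hφ using fun n => LinearMap.mem_range.mp (hu n)
    have hcauchy : CauchySeq (fun n => ((φ n : ℋ))) := by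
      rw [Metric.cauchySeq_iff]
      intro ε hε
      obtain ⟨N, hN⟩ := Metric.cauchySeq_iff.mp hulim.cauchySeq (κ * ε) (by positivity)
      refine ⟨N, fun m hm n hn => ?_⟩
      have h1 : A (φ m - φ n) = u m - u n := by
        rw [hsubA, ← hAmap, ← hAmap, hφ m, hφ n]
      have h2 := hbound (φ m - φ n)
      rw [h1] at h2
      have h3 : dist (u m) (u n) < κ * ε := hN m hm n hn
      rw [dist_eq_norm] at h3 ⊢
      have h4 : ‖((φ m - φ n : B.domain) : ℋ)‖ = ‖((φ m : ℋ)) - ((φ n : ℋ))‖ := by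
        rw [Submodule.coe_sub]
      rw [h4] at h2
      nlinarith
    obtain ⟨ψ, hψ⟩ := cauchySeq_tendsto_of_complete hcauchy
    have hClim : Filter.Tendsto (fun n => Complex.I • C ((φ n : ℋ))) Filter.atTop
        (nhds (Complex.I • C ψ)) :=
      (((C.continuous.tendsto ψ).comp hψ)).const_smul _
    have hBlim : Filter.Tendsto (fun n => ((B (φ n) : ℋ))) Filter.atTop
        (nhds (ξ - Complex.I • C ψ)) := by
      have heq : (fun n => ((B (φ n) : ℋ)))
          = fun n => u n - Complex.I • C ((φ n : ℋ)) := by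
        funext n
        rw [← hφ n, hAmap]
        simp only [hA]
        abel
      rw [heq]
      exact hulim.sub hClim
    have hform : ∀ z : B.domain,
        inner (𝕜 := ℂ) (ξ - Complex.I • C ψ) ((z : ℋ)) = inner (𝕜 := ℂ) ψ ((B z : ℋ)) := by
      intro z
      have t1 : Filter.Tendsto (fun n => inner (𝕜 := ℂ) ((B (φ n) : ℋ)) ((z : ℋ)))
          Filter.atTop (nhds (inner (𝕜 := ℂ) (ξ - Complex.I • C ψ) ((z : ℋ)))) :=
        hBlim.inner tendsto_const_nhds
      have t2 : Filter.Tendsto (fun n => inner (𝕜 := ℂ) ((B (φ n) : ℋ)) ((z : ℋ)))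
          Filter.atTop (nhds (inner (𝕜 := ℂ) ψ ((B z : ℋ)))) := by
        have heq : (fun n => inner (𝕜 := ℂ) ((B (φ n) : ℋ)) ((z : ℋ)))
            = fun n => inner (𝕜 := ℂ) ((φ n : ℋ)) ((B z : ℋ)) :=
          funext fun n => hsym (φ n) z
        rw [heq]
        exact hψ.inner tendsto_const_nhds
      exact tendsto_nhds_unique t1 t2
    obtain ⟨hmem, hval⟩ := hrecover ψ (ξ - Complex.I • C ψ) hform
    refine LinearMap.mem_range.mpr ⟨⟨ψ, hmem⟩, ?_⟩
    rw [hAmap]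
    simp only [hA, hval]
    abel
  -- orthogonal complement of the range is trivial
  have horth : (LinearMap.range Amap : Submodule ℂ ℋ)ᗮ = ⊥ := by
    rw [Submodule.eq_bot_iff]
    intro ψ hψmem
    have hperp : ∀ x : B.domain, inner (𝕜 := ℂ) (A x) ψ = 0 := fun x =>
      (Submodule.mem_orthogonal _ ψ).mp hψmem (A x)
        (by rw [← hAmap]; exact LinearMap.mem_range_self _ x)
    have hCψ : ∀ z : B.domain,
        inner (𝕜 := ℂ) (Complex.I • C ψ) ((z : ℋ)) = inner (𝕜 := ℂ) ψ ((B z : ℋ)) := by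
      intro z
      have h0 := hperp z
      simp only [hA] at h0
      rw [inner_add_left, inner_smul_left, Complex.conj_I] at h0
      have hCsa : inner (𝕜 := ℂ) (C ((z : ℋ))) ψ = inner (𝕜 := ℂ) ((z : ℋ)) (C ψ) :=
        hC.isSymmetric _ _
      rw [hCsa] at h0
      have h1 : inner (𝕜 := ℂ) ((B z : ℋ)) ψ
          = Complex.I * inner (𝕜 := ℂ) ((z : ℋ)) (C ψ) := by
        linear_combination h0
      calc inner (𝕜 := ℂ) (Complex.I • C ψ) ((z : ℋ))
          = -Complex.I * inner (𝕜 := ℂ) (C ψ) ((z : ℋ)) := by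
            rw [inner_smul_left, Complex.conj_I]
        _ = (starRingEnd ℂ) (Complex.I * inner (𝕜 := ℂ) ((z : ℋ)) (C ψ)) := by
            rw [map_mul, Complex.conj_I, inner_conj_symm]
        _ = (starRingEnd ℂ) (inner (𝕜 := ℂ) ((B z : ℋ)) ψ) := by rw [h1]
        _ = inner (𝕜 := ℂ) ψ ((B z : ℋ)) := inner_conj_symm _ _
    obtain ⟨hmem, hval⟩ := hrecover ψ (Complex.I • C ψ) hCψ
    have h0 := hperp ⟨ψ, hmem⟩
    have h1 : inner (𝕜 := ℂ) ((((⟨ψ, hmem⟩ : B.domain)) : ℋ)) (A ⟨ψ, hmem⟩) = 0 := by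
      rw [← inner_conj_symm, h0, map_zero]
    have h2 := hkey ⟨ψ, hmem⟩
    rw [h1] at h2
    simp only [Complex.zero_im] at h2
    have h3 : ‖ψ‖ = 0 := by
      have h4 : ‖(((⟨ψ, hmem⟩ : B.domain)) : ℋ)‖ = ‖ψ‖ := rfl
      rw [h4] at h2
      by_contra hne
      have hpos : 0 < ‖ψ‖ := lt_of_le_of_ne (norm_nonneg ψ) (Ne.symm hne)
      have : 0 < κ * ‖ψ‖ ^ 2 := mul_pos hκ (pow_pos hpos 2)
      linarith
    exact norm_eq_zero.mp h3
  -- range is everything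
  have htop : (LinearMap.range Amap : Submodule ℂ ℋ) = ⊤ := by
    have h1 : (LinearMap.range Amap : Submodule ℂ ℋ).topologicalClosure
        = LinearMap.range Amap := hclosed.submodule_topologicalClosure_eq
    have h2 := (LinearMap.range Amap : Submodule ℂ ℋ).orthogonal_orthogonal_eq_closure
    rw [horth, Submodule.bot_orthogonal_eq_top, h1] at h2
    exact h2.symm
  have hsurj : Function.Surjective A := by
    intro ξ
    have hmem : ξ ∈ LinearMap.range Amap := htop ▸ Submodule.mem_top
    obtain ⟨x, hx⟩ := LinearMap.mem_range.mp hmem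
    exact ⟨x, by rw [← hAmap]; exact hx⟩
  refine ⟨⟨hinj, hsurj⟩, fun φ => ?_⟩
  have h := hbound φ
  rw [inv_mul_eq_div, le_div_iff₀ hκ]
  nlinarith
end
end
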